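/- arXiv:2404.13717 — 2 statements merged into one kernel-verified Lean document; each statement's English description precedes it below -/
import Mathlib

section
/- H is a first integral of the system: if γ : I → ℝ⁴ is differentiable on an interval I and satisfies γ'(t) = X_{η₃}(γ(t)) for all t ∈ I, then the function t ↦ H(γ(t)) is constant on I; equivalently, the derivative of H in the direction X_{η₃}(x) vanishes at every x ∈ ℝ⁴. -/
/-- The vector field of the system x₁' = x₂, x₂' = x₃, x₃' = x₄,
    x₄' = −x₁ + η₃x₃ + x₁². -/
def Xfield (η₃ : ℝ) (x : Fin 4 → ℝ) : Fin 4 → ℝ :=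
  ![x 1, x 2, x 3, -x 0 + η₃ * x 2 + (x 0) ^ 2]

/-- The first integral H(x₁,x₂,x₃,x₄)
    = (1/2)x₁² − (1/3)x₁³ − (η₃/2)x₂² + x₂x₄ − (1/2)x₃². -/
noncomputable def Hfun (η₃ : ℝ) (x : Fin 4 → ℝ) : ℝ :=
  (1 / 2) * (x 0) ^ 2 - (1 / 3) * (x 0) ^ 3 - (η₃ / 2) * (x 1) ^ 2
    + x 1 * x 3 - (1 / 2) * (x 2) ^ 2

/-! Paired with `X`, the gradient `(x₁ - x₁², x₄ - η₃x₂, -x₃, x₂)` of `H` gives terms that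
cancel in pairs, so `t ↦ H(γ t)` has zero derivative along a solution; the mean value
inequality on the convex set `I` then makes it constant. -/

theorem Set.OrdConnected.eq_of_hasDerivAt_eq_zero {F : Type*} [NormedAddCommGroup F]
    [NormedSpace ℝ F] {f : ℝ → F} {I : Set ℝ} (hI : I.OrdConnected)
    (hf : ∀ t ∈ I, HasDerivAt f 0 t) {s t : ℝ} (hs : s ∈ I) (ht : t ∈ I) : f s = f t := by
  have h := Convex.norm_image_sub_le_of_norm_hasDerivWithin_le
    (fun t ht ↦ (hf t ht).hasDerivWithinAt) (fun _ _ ↦ norm_zero.le) hI.convex ht hs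
  simpa [sub_eq_zero] using h

theorem Set.OrdConnected.apply_eq_of_fderiv_apply_eq_zero {E F : Type*} [NormedAddCommGroup E]
    [NormedSpace ℝ E] [NormedAddCommGroup F] [NormedSpace ℝ F] {H : E → F} {X : E → E}
    {γ : ℝ → E} {I : Set ℝ} (hI : I.OrdConnected) (hH : Differentiable ℝ H)
    (hHX : ∀ x, fderiv ℝ H x (X x) = 0) (hγ : ∀ t ∈ I, HasDerivAt γ (X (γ t)) t)
    {s t : ℝ} (hs : s ∈ I) (ht : t ∈ I) : H (γ s) = H (γ t) :=
  hI.eq_of_hasDerivAt_eq_zero (f := H ∘ γ) (fun t ht ↦ by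
    simpa [hHX] using (hH (γ t)).hasFDerivAt.comp_hasDerivAt t (hγ t ht)) hs ht

theorem differentiable_Hfun (η₃ : ℝ) : Differentiable ℝ (Hfun η₃) := by
  unfold Hfun
  fun_prop

theorem fderiv_Hfun_apply (η₃ : ℝ) (x v : Fin 4 → ℝ) :
    fderiv ℝ (Hfun η₃) x v =
      (x 0 - x 0 ^ 2) * v 0 + (x 3 - η₃ * x 1) * v 1 - x 2 * v 2 + x 1 * v 3 := by
  have hx (i : Fin 4) := hasFDerivAt_apply (𝕜 := ℝ) i x
  have h := ((((((hx 0).pow 2).const_mul (1 / 2)).sub (((hx 0).pow 3).const_mul (1 / 3))).sub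
    (((hx 1).pow 2).const_mul (η₃ / 2))).add ((hx 1).mul (hx 3))).sub
    (((hx 2).pow 2).const_mul (1 / 2))
  rw [HasFDerivAt.fderiv (f := Hfun η₃) h]
  simp only [sub_apply, add_apply, smul_apply, ContinuousLinearMap.proj_apply, smul_eq_mul,
    nsmul_eq_mul]
  ring

theorem fderiv_Hfun_Xfield (η₃ : ℝ) (x : Fin 4 → ℝ) :
    fderiv ℝ (Hfun η₃) x (Xfield η₃ x) = 0 := by
  rw [fderiv_Hfun_apply]
  simp only [Xfield, Matrix.cons_val_zero, Matrix.cons_val_one, Matrix.cons_val]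
  ring

/-- H is a first integral of the system: along any solution defined on an
    interval, t ↦ H(γ(t)) is constant; equivalently, the derivative of H in
    the direction X_{η₃}(x) vanishes at every x ∈ ℝ⁴. -/
theorem stmt_2 (η₃ : ℝ) :
    (∀ (γ : ℝ → Fin 4 → ℝ) (I : Set ℝ), I.OrdConnected →
      (∀ t ∈ I, HasDerivAt γ (Xfield η₃ (γ t)) t) →
      ∀ s ∈ I, ∀ t ∈ I, Hfun η₃ (γ s) = Hfun η₃ (γ t)) ∧
    (∀ x : Fin 4 → ℝ, fderiv ℝ (Hfun η₃) x (Xfield η₃ x) = 0) :=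
  ⟨fun _ _ hI hγ _ hs _ ht ↦ hI.apply_eq_of_fderiv_apply_eq_zero (differentiable_Hfun η₃)
    (fderiv_Hfun_Xfield η₃) hγ hs ht, fderiv_Hfun_Xfield η₃⟩
end

section
/- (Bifocus case) If −2 < η₃ < 2, then, with ρ = √(η₃+2)/2 and ω = √(2−η₃)/2, the spectrum of the matrix A regarded as a complex matrix is exactly the set {ρ + ωi, ρ − ωi, −ρ + ωi, −ρ − ωi}; in particular A has two pairs of complex-conjugate eigenvalues with nonzero real parts of opposite signs. -/
/-- The linearization at the origin of the vector field
    X_{η₃}(x₁,x₂,x₃,x₄) = (x₂,x₃,x₄,−x₁+η₃x₃+x₁²). -/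
def Amat (η₃ : ℝ) : Matrix (Fin 4) (Fin 4) ℝ :=
  !![0, 1, 0, 0;
     0, 0, 1, 0;
     0, 0, 0, 1;
     -1, 0, η₃, 0]

/-!
The characteristic polynomial of `A` is `μ⁴ - η₃ μ² + 1`. For `β = ω i` we have
`4 ρ² = η₃ + 2` and `ρ² - β² = ρ² + ω² = 1`, so the polynomial equals
`(μ² + 1)² - 4 ρ² μ² = ((μ - ρ)² - β²) ((μ + ρ)² - β²)`, whose roots are `±ρ ± ω i`.
-/

open Polynomial Complex

theorem Amat_charpoly (η₃ : ℝ) : (Amat η₃).charpoly = X ^ 4 - C η₃ * X ^ 2 + 1 := by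
  rw [Matrix.charpoly, Matrix.det_succ_row_zero]
  simp [Fin.sum_univ_succ, Matrix.det_fin_three, Matrix.submatrix, Fin.succAbove,
    Matrix.charmatrix_apply, Amat, Matrix.diagonal]
  ring

theorem mem_spectrum_Amat_map_iff (η₃ : ℝ) (μ : ℂ) :
    μ ∈ spectrum ℂ ((Amat η₃).map ofReal) ↔ μ ^ 4 - η₃ * μ ^ 2 + 1 = 0 := by
  have hmap : ((Amat η₃).map ofReal).charpoly = (Amat η₃).charpoly.map ofRealHom :=
    (Amat η₃).charpoly_map ofRealHom
  simp [Matrix.mem_spectrum_iff_isRoot_charpoly, hmap, Amat_charpoly]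

theorem pow_four_sub_mul_sq_add_one_eq_prod {R : Type*} [CommRing R] {η ρ β : R}
    (hρ : 4 * ρ ^ 2 = η + 2) (hρβ : ρ ^ 2 - β ^ 2 = 1) (μ : R) :
    μ ^ 4 - η * μ ^ 2 + 1 =
      (μ - (ρ + β)) * (μ - (ρ - β)) * (μ - (-ρ + β)) * (μ - (-ρ - β)) := by
  linear_combination μ ^ 2 * hρ - (2 * μ ^ 2 + 1 + ρ ^ 2 - β ^ 2) * hρβ

theorem pow_four_sub_mul_sq_add_one_eq_zero_iff {R : Type*} [CommRing R] [IsDomain R]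
    {η ρ β : R} (hρ : 4 * ρ ^ 2 = η + 2) (hρβ : ρ ^ 2 - β ^ 2 = 1) (μ : R) :
    μ ^ 4 - η * μ ^ 2 + 1 = 0 ↔ μ = ρ + β ∨ μ = ρ - β ∨ μ = -ρ + β ∨ μ = -ρ - β := by
  simp only [pow_four_sub_mul_sq_add_one_eq_prod hρ hρβ, mul_eq_zero, sub_eq_zero, or_assoc]

theorem spectrum_Amat_map {η₃ ρ ω : ℝ} (hρ : 4 * ρ ^ 2 = η₃ + 2) (hω : 4 * ω ^ 2 = 2 - η₃) :
    spectrum ℂ ((Amat η₃).map ofReal) =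
      {ρ + ω * I, ρ - ω * I, -ρ + ω * I, -ρ - ω * I} := by
  have hρ' : 4 * (ρ : ℂ) ^ 2 = η₃ + 2 := by exact_mod_cast hρ
  have hρω : (ρ : ℂ) ^ 2 - (ω * I) ^ 2 = 1 := by
    rw [mul_pow, I_sq]
    exact_mod_cast (by linarith : ρ ^ 2 - ω ^ 2 * -1 = 1)
  ext μ
  simp only [mem_spectrum_Amat_map_iff, pow_four_sub_mul_sq_add_one_eq_zero_iff hρ' hρω,
    Set.mem_insert_iff, Set.mem_singleton_iff]

theorem four_mul_sq_sqrt_div_two {x : ℝ} (hx : 0 ≤ x) : 4 * (√x / 2) ^ 2 = x := by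
  rw [div_pow, Real.sq_sqrt hx]
  ring

/-- (Bifocus case) If −2 < η₃ < 2 then, with ρ = √(η₃+2)/2 and ω = √(2−η₃)/2
    (both positive), the spectrum of A regarded as a complex matrix is exactly
    {ρ + ωi, ρ − ωi, −ρ + ωi, −ρ − ωi}: two pairs of complex-conjugate
    eigenvalues with nonzero real parts of opposite signs. -/
theorem stmt_6 (η₃ : ℝ) (h₁ : -2 < η₃) (h₂ : η₃ < 2) :
    0 < Real.sqrt (η₃ + 2) / 2 ∧ 0 < Real.sqrt (2 - η₃) / 2 ∧
    spectrum ℂ ((Amat η₃).map (fun r => (r : ℂ))) =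
      {(Real.sqrt (η₃ + 2) / 2 : ℝ) + (Real.sqrt (2 - η₃) / 2 : ℝ) * Complex.I,
       (Real.sqrt (η₃ + 2) / 2 : ℝ) - (Real.sqrt (2 - η₃) / 2 : ℝ) * Complex.I,
       -(Real.sqrt (η₃ + 2) / 2 : ℝ) + (Real.sqrt (2 - η₃) / 2 : ℝ) * Complex.I,
       -(Real.sqrt (η₃ + 2) / 2 : ℝ) - (Real.sqrt (2 - η₃) / 2 : ℝ) * Complex.I} := by
  have hplus : 0 < η₃ + 2 := by linarith
  have hminus : 0 < 2 - η₃ := by linarith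
  exact ⟨by positivity, by positivity,
    spectrum_Amat_map (four_mul_sq_sqrt_div_two hplus.le) (four_mul_sq_sqrt_div_two hminus.le)⟩
end
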